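/- Let α be a type, S ⊆ α a set of feasible solutions, p ≥ 2 a number of objectives, g : Fin p → α → ℝ a family of objective functions to be maximized, eps > 0 a real number, r : Fin p → ℝ with r k > 0 for all k, and ε : Fin p → ℝ a vector of right-hand sides. Suppose x* ∈ S satisfies g k x* ≥ ε k for all k ≠ 0, and x* maximizes the augmented objective g 0 x + eps · ∑_{k ≠ 0} (g k x − ε k)/(r k) over the feasible set {x ∈ S : ∀ k ≠ 0, g k x ≥ ε k}. Then x* is Pareto efficient for the multi-objective problem of maximizing all objectives g k over S; that is, there is no x ∈ S with g k x ≥ g k x* for every k ∈ Fin p and g k x > g k x* for at least one k ∈ Fin p. -/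
import Mathlib


theorem augmented_eps_constraint_pareto
    {α : Type*} (S : Set α) (p : ℕ) (hp : 2 ≤ p)
    (g : Fin p → α → ℝ) (eps : ℝ) (heps : 0 < eps)
    (r : Fin p → ℝ) (hr : ∀ k, 0 < r k)
    (ε : Fin p → ℝ) (xstar : α)
    (k0 : Fin p) (hk0 : (k0 : ℕ) = 0)
    (hxS : xstar ∈ S)
    (hxfeas : ∀ k : Fin p, k ≠ k0 → g k xstar ≥ ε k)
    (hopt : ∀ x ∈ S, (∀ k : Fin p, k ≠ k0 → g k x ≥ ε k) →
      g k0 x + eps * ∑ k ∈ Finset.univ.filter (fun k : Fin p => k ≠ k0), (g k x - ε k) / r k ≤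
      g k0 xstar + eps * ∑ k ∈ Finset.univ.filter (fun k : Fin p => k ≠ k0), (g k xstar - ε k) / r k) :
    ¬ ∃ x ∈ S, (∀ k : Fin p, g k x ≥ g k xstar) ∧ (∃ k : Fin p, g k x > g k xstar) := by
  rintro ⟨x, hxSmem, hge, k, hk⟩
  have hfeas : ∀ j : Fin p, j ≠ k0 → g j x ≥ ε j := fun j hj =>
    le_trans (hxfeas j hj) (hge j)
  have hterm : ∀ j : Fin p, (g j xstar - ε j) / r j ≤ (g j x - ε j) / r j := by
    intro j
    gcongr
    · exact (hr j).le
    · linarith [hge j]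
  have hopt' := hopt x hxSmem hfeas
  by_cases hkk : k = k0
  · subst hkk
    have hsum : ∑ j ∈ Finset.univ.filter (fun j : Fin p => j ≠ k), (g j xstar - ε j) / r j ≤
        ∑ j ∈ Finset.univ.filter (fun j : Fin p => j ≠ k), (g j x - ε j) / r j :=
      Finset.sum_le_sum (fun j _ => hterm j)
    nlinarith
  · have hmem : k ∈ Finset.univ.filter (fun j : Fin p => j ≠ k0) := by simp [hkk]
    have hsum : ∑ j ∈ Finset.univ.filter (fun j : Fin p => j ≠ k0), (g j xstar - ε j) / r j <
        ∑ j ∈ Finset.univ.filter (fun j : Fin p => j ≠ k0), (g j x - ε j) / r j := by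
      apply Finset.sum_lt_sum (fun j _ => hterm j) ⟨k, hmem, ?_⟩
      gcongr
      exact hr k
    nlinarith [hge k0]
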